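/- arXiv:2412.07098 — 2 statements merged into one kernel-verified Lean document; each statement's English description precedes it below -/
import Mathlib

section
/- Let 1 < a < 2 and M > 1 with 3/(2−a) ≤ log₂(8M). Then for every nonempty spin-flip collection γ, 𝒩(γ) ≤ c(M,a)·𝒩'(γ), where c(M,a) = 6·(2a/(a−1))^{log_a 2} · ζ(log_a 2) · (log₂(8M))^{log_a 2} and ζ is the Riemann zeta function (note log_a 2 > 1 since a < 2). -/
noncomputable section
open scoped Classical

/-! An integer `k : ℤ` encodes the dual-lattice site (spin flip) `k + 1/2 ∈ ℤ + 1/2`. -/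

/-- Auxiliary greedy construction of the canonical cover (with fuel). -/
def coverAux (n : ℕ) : ℕ → Finset ℤ → Finset ℤ
  | 0, _ => ∅
  | fuel + 1, γ =>
    if h : γ.Nonempty then
      insert (γ.min' h) (coverAux n fuel (γ.filter fun x => γ.min' h + 2 ^ n ≤ x))
    else ∅

/-- The left endpoints of the intervals of the canonical greedy cover `𝒾ₙ(γ)` of `γ` by
open intervals of diameter `2^n` with integer endpoints: `u` encodes `(u, u + 2^n)`. -/
def cover (n : ℕ) (γ : Finset ℤ) : Finset ℤ := coverAux n γ.card γ

/-- The diameter of `γ` (as a subset of `ℤ + 1/2`). -/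
def diamZ (γ : Finset ℤ) : ℤ := WithBot.unbotD 0 γ.max - WithTop.untopD 0 γ.min

/-- `n₀(γ) = ⌊log₂ diam γ⌋`. -/
def n0 (γ : Finset ℤ) : ℕ := Nat.log 2 (diamZ γ).toNat

/-- The cover size `𝒩(γ) = ∑_{n=0}^{n₀(γ)} |𝒾ₙ(γ)|`. -/
def coverSize (γ : Finset ℤ) : ℕ := ∑ n ∈ Finset.range (n0 γ + 1), (cover n γ).card

/-- The isolated intervals `𝒾'ₙ(γ)`. -/
def isoCover (M a : ℝ) (n : ℕ) (γ : Finset ℤ) : Finset ℤ :=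
  (cover n γ).filter fun u => ∀ u' ∈ cover n γ, u' ≠ u →
    2 * M * (2 : ℝ) ^ (a * n) ≤ |(u : ℝ) - (u' : ℝ)| - 2 ^ n

/-- The isolated cover size `𝒩'(γ) = |γ| + ∑_{n=1}^{n₀(γ)} |𝒾'ₙ(γ)|`. -/
def isoCoverSize (M a : ℝ) (γ : Finset ℤ) : ℕ :=
  γ.card + ∑ n ∈ Finset.Icc 1 (n0 γ), (isoCover M a n γ).card

/-- The Riemann zeta function for real `s > 1`, `ζ(s) = ∑_{n≥1} n^{-s}`. -/
def zetaR (s : ℝ) : ℝ := ∑' n : ℕ, 1 / ((n : ℝ) + 1) ^ s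

/-!
Write `N n = |𝒾ₙ(γ)|`, `N' n = |𝒾'ₙ(γ)|` and `L = log₂ (8M)`. Left endpoints of non-isolated
intervals of `𝒾ₙ(γ)` lie within `g = ⌊2ⁿ + 2M 2^{an}⌋` of another one, and sweeping greedy windows
`[u, u + 2g]` from the left shows that each of them saves half an interval at the scale
`m = ⌈a n + L⌉`, where `2^m ≥ 2g + 2ⁿ`: `N n - N' n ≤ 2 (N n - N m)`. Summing over `1 ≤ n ≤ n₀`
and expanding `N n - N m` into the drops `N j - N (j + 1)`, `n ≤ j < m`, each drop is counted for
at most `((a - 1) j + L + a) / a` scales; summation by parts then gives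
`(2 - a) 𝒩(γ) ≤ (2L + 4) 𝒩'(γ)`. The constant `(2L + 4) / (2 - a)` is below `c(M, a)` because
`ζ(s) ≥ 1 / (s - 1)` (integral test), `2a / (a - 1) ≥ 4` and `(s - 1) log 2 ≤ s (2 - a)` for
`s = log_a 2`.
-/

def Covers (w : ℤ) (T γ : Finset ℤ) : Prop := ∀ x ∈ γ, ∃ t ∈ T, t ≤ x ∧ x < t + w

lemma Covers.mono_width {w w' : ℤ} {T γ : Finset ℤ} (h : Covers w T γ) (hw : w ≤ w') :
    Covers w' T γ := fun x hx => by
  obtain ⟨t, ht, h₁, h₂⟩ := h x hx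
  exact ⟨t, ht, h₁, by omega⟩

lemma Covers.trans {w w' : ℤ} {T C γ : Finset ℤ} (hT : Covers w T C) (hC : Covers w' C γ) :
    Covers (w + w' - 1) T γ := fun x hx => by
  obtain ⟨c, hc, h₁, h₂⟩ := hC x hx
  obtain ⟨t, ht, h₃, h₄⟩ := hT c hc
  exact ⟨t, ht, by omega, by omega⟩

lemma coverAux_empty (n f : ℕ) : coverAux n f ∅ = ∅ := by
  cases f <;> simp [coverAux]

lemma filter_min'_add_le_ssubset {γ : Finset ℤ} (h : γ.Nonempty) (n : ℕ) :
    γ.filter (fun x => γ.min' h + 2 ^ n ≤ x) ⊂ γ := by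
  rw [Finset.filter_ssubset]
  exact ⟨_, γ.min'_mem h, (lt_add_of_pos_right _ (by positivity)).not_ge⟩

lemma coverAux_congr_fuel (n : ℕ) {f₁ f₂ : ℕ} {γ : Finset ℤ} (h₁ : γ.card ≤ f₁)
    (h₂ : γ.card ≤ f₂) : coverAux n f₁ γ = coverAux n f₂ γ := by
  induction f₁ generalizing f₂ γ with
  | zero => rw [Finset.card_eq_zero.1 (Nat.le_zero.1 h₁), coverAux_empty, coverAux_empty]
  | succ f ih =>
    rcases γ.eq_empty_or_nonempty with rfl | hne
    · rw [coverAux_empty, coverAux_empty]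
    obtain ⟨g, rfl⟩ : ∃ g, f₂ = g + 1 := ⟨f₂ - 1, by have := hne.card_pos; omega⟩
    have hlt := Finset.card_lt_card (filter_min'_add_le_ssubset hne n)
    simp only [coverAux, dif_pos hne]
    rw [ih (f₂ := g) (by omega) (by omega)]

lemma cover_eq_insert {γ : Finset ℤ} (h : γ.Nonempty) (n : ℕ) :
    cover n γ = insert (γ.min' h) (cover n (γ.filter fun x => γ.min' h + 2 ^ n ≤ x)) := by
  obtain ⟨c, hc⟩ : ∃ c, γ.card = c + 1 := ⟨γ.card - 1, by have := h.card_pos; omega⟩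
  have hlt := Finset.card_lt_card (filter_min'_add_le_ssubset h n)
  rw [cover, hc, coverAux, dif_pos h, cover, coverAux_congr_fuel n (by omega) le_rfl]

lemma cover_subset (n : ℕ) (γ : Finset ℤ) : cover n γ ⊆ γ := by
  induction γ using Finset.strongInduction with
  | H γ ih =>
  rcases γ.eq_empty_or_nonempty with rfl | hne
  · simp [cover, coverAux_empty]
  have hsub := filter_min'_add_le_ssubset hne n
  rw [cover_eq_insert hne n]
  exact Finset.insert_subset (γ.min'_mem hne) ((ih _ hsub).trans hsub.subset)

lemma covers_cover (n : ℕ) (γ : Finset ℤ) : Covers (2 ^ n) (cover n γ) γ := by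
  induction γ using Finset.strongInduction with
  | H γ ih =>
  intro x hx
  have hne : γ.Nonempty := ⟨x, hx⟩
  rw [cover_eq_insert hne n]
  by_cases hfar : γ.min' hne + 2 ^ n ≤ x
  · obtain ⟨u, hu, h⟩ := ih _ (filter_min'_add_le_ssubset hne n) x (by simp [hx, hfar])
    exact ⟨u, Finset.mem_insert_of_mem hu, h⟩
  · exact ⟨_, Finset.mem_insert_self _ _, γ.min'_le x hx, by omega⟩

/-- The window of `T` containing `min γ` covers no point of `γ` beyond the first greedy window. -/
lemma card_cover_le {n : ℕ} {T γ : Finset ℤ} (hT : Covers (2 ^ n) T γ) :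
    (cover n γ).card ≤ T.card := by
  induction γ using Finset.strongInduction generalizing T with
  | H γ ih =>
  rcases γ.eq_empty_or_nonempty with rfl | hne
  · simp [cover, coverAux_empty]
  obtain ⟨t₀, ht₀, h₁, h₂⟩ := hT _ (γ.min'_mem hne)
  have hrest : Covers (2 ^ n) (T.erase t₀) (γ.filter fun x => γ.min' hne + 2 ^ n ≤ x) := by
    intro x hx
    rw [Finset.mem_filter] at hx
    obtain ⟨t, ht, h₃, h₄⟩ := hT x hx.1
    exact ⟨t, Finset.mem_erase.2 ⟨by rintro rfl; omega, ht⟩, h₃, h₄⟩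
  have := ih _ (filter_min'_add_le_ssubset hne n) hrest
  rw [cover_eq_insert hne n]
  calc _ ≤ _ + 1 := Finset.card_insert_le _ _
    _ ≤ (T.erase t₀).card + 1 := by omega
    _ = T.card := Finset.card_erase_add_one ht₀

lemma card_cover_pos {γ : Finset ℤ} (h : γ.Nonempty) (n : ℕ) : 0 < (cover n γ).card := by
  rw [cover_eq_insert h n]
  exact (Finset.insert_nonempty _ _).card_pos

lemma card_cover_antitone (γ : Finset ℤ) : Antitone fun n => (cover n γ).card :=
  fun _ _ h => card_cover_le ((covers_cover _ γ).mono_width (pow_le_pow_right₀ (by norm_num) h))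

lemma diamZ_eq {γ : Finset ℤ} (h : γ.Nonempty) : diamZ γ = γ.max' h - γ.min' h := by
  rw [diamZ, ← Finset.coe_max' h, ← Finset.coe_min' h]
  rfl

lemma card_cover_eq_one {γ : Finset ℤ} (h : γ.Nonempty) {n : ℕ} (hn : n0 γ < n) :
    (cover n γ).card = 1 := by
  have hdiam : γ.max' h - γ.min' h < 2 ^ n := by
    have hlt : (diamZ γ).toNat < 2 ^ n :=
      (Nat.lt_pow_succ_log_self one_lt_two _).trans_le (Nat.pow_le_pow_right two_pos hn)
    have h0 : 0 ≤ diamZ γ := by rw [diamZ_eq h]; linarith [γ.min'_le _ (γ.max'_mem h)]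
    rw [← diamZ_eq h, ← Int.toNat_of_nonneg h0]
    exact_mod_cast hlt
  have hmin : Covers (2 ^ n) {γ.min' h} γ := fun x hx =>
    ⟨_, Finset.mem_singleton_self _, γ.min'_le x hx, by linarith [γ.le_max' x hx]⟩
  have := card_cover_le hmin
  have := card_cover_pos h n
  rw [Finset.card_singleton] at *
  omega

def crowded (g : ℤ) (C : Finset ℤ) : Finset ℤ :=
  C.filter fun b => ∃ p ∈ C, p ≠ b ∧ |b - p| ≤ g

section Crowded

variable {g : ℤ} {C : Finset ℤ}

lemma crowded_subset : crowded g C ⊆ C := Finset.filter_subset _ _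

lemma card_crowded_filter_le_add_two_le (hg : 0 ≤ g) {u : ℤ} (hu : u ∈ C)
    (hmin : ∀ x ∈ C, u ≤ x) :
    ((crowded g C).filter (· ≤ u + g)).card + 2 ≤ 2 * (C.filter (· ≤ u + g)).card := by
  have hsub : (crowded g C).filter (· ≤ u + g) ⊆ C.filter (· ≤ u + g) :=
    Finset.filter_subset_filter _ crowded_subset
  have hu' : u ∈ C.filter (· ≤ u + g) := Finset.mem_filter.2 ⟨hu, by omega⟩
  rcases ((crowded g C).filter (· ≤ u + g)).eq_empty_or_nonempty with h0 | ⟨b, hb⟩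
  · rw [h0, Finset.card_empty]
    have := Finset.card_pos.2 ⟨u, hu'⟩
    omega
  have : 1 < (C.filter (· ≤ u + g)).card := by
    rw [Finset.one_lt_card]
    simp only [crowded, Finset.mem_filter] at hb
    obtain ⟨⟨hbC, p, hpC, hpb, hbp⟩, hbu⟩ := hb
    by_cases hbu' : b = u
    · subst hbu'
      exact ⟨b, hu', p, Finset.mem_filter.2 ⟨hpC, by
        have := hmin p hpC; rw [abs_le] at hbp; omega⟩, hpb.symm⟩
    · exact ⟨u, hu', b, Finset.mem_filter.2 ⟨hbC, hbu⟩, Ne.symm hbu'⟩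
  have := Finset.card_le_card hsub
  omega

lemma exists_partner_le_of_mem_sdiff {s b : ℤ}
    (hb : b ∈ (crowded g C).filter (s < ·) \ crowded g (C.filter (s < ·))) :
    b ∈ C ∧ s < b ∧ ∃ p ∈ C, p ≤ s ∧ |b - p| ≤ g := by
  simp only [crowded, Finset.mem_sdiff, Finset.mem_filter] at hb
  obtain ⟨⟨⟨hbC, p, hpC, hpb, hbp⟩, hsb⟩, hb'⟩ := hb
  refine ⟨hbC, hsb, p, hpC, ?_, hbp⟩
  by_contra hps
  exact hb' ⟨⟨hbC, hsb⟩, p, ⟨hpC, not_le.1 hps⟩, hpb, hbp⟩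

/-- If `b₁ < b₂` both lie in the difference, the partner of `b₂` is at most `s < b₁`, so `b₁` is
a closer partner of `b₂`. -/
lemma card_sdiff_crowded_filter_lt_le_one (s : ℤ) :
    ((crowded g C).filter (s < ·) \ crowded g (C.filter (s < ·))).card ≤ 1 := by
  refine Finset.card_le_one.2 fun b₁ h₁ b₂ h₂ => ?_
  by_contra hne
  wlog h₁₂ : b₁ < b₂ generalizing b₁ b₂
  · exact this b₂ h₂ b₁ h₁ (Ne.symm hne) (lt_of_le_of_ne (not_lt.1 h₁₂) (Ne.symm hne))
  obtain ⟨hb₁C, hsb₁, -⟩ := exists_partner_le_of_mem_sdiff h₁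
  obtain ⟨hb₂C, hsb₂, p, -, hps, hb₂p⟩ := exists_partner_le_of_mem_sdiff h₂
  refine (Finset.mem_sdiff.1 h₂).2 (Finset.mem_filter.2 ⟨Finset.mem_filter.2 ⟨hb₂C, hsb₂⟩, b₁,
    Finset.mem_filter.2 ⟨hb₁C, hsb₁⟩, hne, ?_⟩)
  rw [abs_le] at hb₂p ⊢
  omega

lemma card_crowded_filter_lt_le (s : ℤ) :
    ((crowded g C).filter (s < ·)).card ≤
      (crowded g (C.filter (s < ·))).card + (C.filter fun x => s - g < x ∧ x ≤ s).card := by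
  set E := (crowded g C).filter (s < ·) \ crowded g (C.filter (s < ·))
  have hE : E.card ≤ (C.filter fun x => s - g < x ∧ x ≤ s).card := by
    rcases E.eq_empty_or_nonempty with h0 | ⟨b, hb⟩
    · simp [h0]
    obtain ⟨-, hsb, p, hpC, hps, hbp⟩ := exists_partner_le_of_mem_sdiff hb
    have : 0 < (C.filter fun x => s - g < x ∧ x ≤ s).card :=
      Finset.card_pos.2 ⟨p, Finset.mem_filter.2 ⟨hpC, by rw [abs_le] at hbp; omega, hps⟩⟩
    have : E.card ≤ 1 := card_sdiff_crowded_filter_lt_le_one s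
    omega
  calc _ ≤ (crowded g (C.filter (s < ·)) ∪ E).card := by
        refine Finset.card_le_card fun b hb => ?_
        by_cases h : b ∈ crowded g (C.filter (s < ·))
        · exact Finset.mem_union_left _ h
        · exact Finset.mem_union_right _ (Finset.mem_sdiff.2 ⟨hb, h⟩)
    _ ≤ _ := (Finset.card_union_le _ _).trans (by omega)

/-- Accounting for the greedy window `W = C ∩ [u, u + 2g]`: besides `W` itself, at most one point
beyond it is crowded in `C` but not in the rest. -/
lemma card_crowded_add_two_le (hg : 0 ≤ g) {u : ℤ} (hu : u ∈ C) (hmin : ∀ x ∈ C, u ≤ x) :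
    (crowded g C).card + 2 ≤
      (crowded g (C.filter (u + 2 * g < ·))).card + 2 * (C.filter (· ≤ u + 2 * g)).card := by
  set B := C.filter fun x => u + 2 * g - g < x ∧ x ≤ u + 2 * g
  set F₁ := (crowded g C).filter (· ≤ u + g)
  set F₃ := (crowded g C).filter (u + 2 * g < ·)
  have hsplit : (crowded g C).card ≤ F₁.card + B.card + F₃.card := by
    have hsub : crowded g C ⊆ (F₁ ∪ B) ∪ F₃ := fun x hx => by
      have hxC := crowded_subset hx
      simp only [F₁, B, F₃, Finset.mem_union, Finset.mem_filter]
      by_cases h₁ : x ≤ u + g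
      · exact Or.inl (Or.inl ⟨hx, h₁⟩)
      by_cases h₃ : u + 2 * g < x
      · exact Or.inr ⟨hx, h₃⟩
      · exact Or.inl (Or.inr ⟨hxC, by omega, by omega⟩)
    have := Finset.card_le_card hsub
    have := Finset.card_union_le (F₁ ∪ B) F₃
    have := Finset.card_union_le F₁ B
    omega
  have hW : (C.filter (· ≤ u + g)).card + B.card ≤ (C.filter (· ≤ u + 2 * g)).card := by
    rw [← Finset.card_union_of_disjoint]
    · refine Finset.card_le_card fun x hx => ?_
      simp only [B, Finset.mem_union, Finset.mem_filter] at hx ⊢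
      rcases hx with ⟨hxC, hx⟩ | ⟨hxC, hx⟩ <;> exact ⟨hxC, by omega⟩
    · exact Finset.disjoint_filter.2 fun x _ h₁ h₂ => by omega
  have hA : F₁.card + 2 ≤ 2 * (C.filter (· ≤ u + g)).card :=
    card_crowded_filter_le_add_two_le hg hu hmin
  have hB : F₃.card ≤ (crowded g (C.filter (u + 2 * g < ·))).card + B.card :=
    card_crowded_filter_lt_le _
  omega

theorem exists_covers_two_mul_card_add_card_crowded_le (hg : 0 ≤ g) (C : Finset ℤ) :
    ∃ T : Finset ℤ, Covers (2 * g + 1) T C ∧ 2 * T.card + (crowded g C).card ≤ 2 * C.card := by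
  induction C using Finset.strongInduction with
  | H C ih =>
  rcases C.eq_empty_or_nonempty with rfl | hne
  · exact ⟨∅, fun x hx => absurd hx (Finset.notMem_empty x), by simp [crowded]⟩
  set u := C.min' hne
  have hu : u ∈ C := C.min'_mem hne
  have hmin : ∀ x ∈ C, u ≤ x := fun x hx => C.min'_le x hx
  have hsub : C.filter (u + 2 * g < ·) ⊂ C := by
    rw [Finset.filter_ssubset]
    exact ⟨u, hu, by omega⟩
  obtain ⟨T, hT, hcard⟩ := ih _ hsub
  refine ⟨insert u T, fun x hx => ?_, ?_⟩
  · by_cases hx' : u + 2 * g < x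
    · obtain ⟨t, ht, h⟩ := hT x (Finset.mem_filter.2 ⟨hx, hx'⟩)
      exact ⟨t, Finset.mem_insert_of_mem ht, h⟩
    · exact ⟨u, Finset.mem_insert_self _ _, hmin x hx, by omega⟩
  · have hC := Finset.card_filter_add_card_filter_not (s := C) (· ≤ u + 2 * g)
    simp only [not_le] at hC
    have := card_crowded_add_two_le hg hu hmin
    have := Finset.card_insert_le u T
    omega

end Crowded

/-- Each non-isolated interval of `𝒾ₙ(γ)` saves half an interval at scale `m`. -/
lemma two_mul_card_cover_add_card_cover_le {M : ℝ} (hM : 0 ≤ M) (a : ℝ) (γ : Finset ℤ)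
    {n m : ℕ} (hw : 3 * (2 : ℝ) ^ n + 4 * M * 2 ^ (a * n) ≤ 2 ^ m) :
    2 * (cover m γ).card + (cover n γ).card ≤ 2 * (cover n γ).card + (isoCover M a n γ).card := by
  set g : ℤ := ⌊(2 : ℝ) ^ n + 2 * M * 2 ^ (a * n)⌋
  have hg : 0 ≤ g := Int.floor_nonneg.2 (by positivity)
  obtain ⟨T, hT, hcard⟩ := exists_covers_two_mul_card_add_card_crowded_le hg (cover n γ)
  have hwidth : 2 * g + 1 + 2 ^ n - 1 ≤ 2 ^ m := by
    have := Int.floor_le ((2 : ℝ) ^ n + 2 * M * 2 ^ (a * n))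
    have : ((2 * g + 2 ^ n : ℤ) : ℝ) ≤ ((2 ^ m : ℤ) : ℝ) := by push_cast; linarith
    have := Int.cast_le.1 this
    omega
  have hm : (cover m γ).card ≤ T.card :=
    card_cover_le ((hT.trans (covers_cover n γ)).mono_width hwidth)
  have hcrowded : cover n γ \ isoCover M a n γ ⊆ crowded g (cover n γ) := by
    intro u hu
    simp only [isoCover, Finset.mem_sdiff, Finset.mem_filter, not_and, not_forall, not_le] at hu
    obtain ⟨u', hu', hne, hlt⟩ := hu.2 hu.1
    refine Finset.mem_filter.2 ⟨hu.1, u', hu', hne, Int.le_floor.2 ?_⟩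
    push_cast
    linarith
  have := Finset.card_le_card hcrowded
  have hiso : isoCover M a n γ ⊆ cover n γ := Finset.filter_subset _ _
  have := Finset.card_sdiff_add_card_eq_card hiso
  omega

section Summation

open Finset

variable {N : ℕ → ℝ} {K : ℕ}

lemma sub_eq_sum_Icc_ite (hconst : ∀ j, K + 1 ≤ j → N j = N (K + 1)) {n m : ℕ} (hn : 1 ≤ n)
    (hnK : n ≤ K + 1) (hnm : n ≤ m) :
    N n - N m = ∑ j ∈ Icc 1 K, if n ≤ j ∧ j < m then N j - N (j + 1) else 0 := by
  have hfilter : (Icc 1 K).filter (fun j => n ≤ j ∧ j < m) = Ico n (min m (K + 1)) := by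
    ext j
    simp only [mem_filter, mem_Icc, mem_Ico]
    omega
  have hNm : N m = N (min m (K + 1)) := by
    rcases le_total m (K + 1) with h | h
    · rw [min_eq_left h]
    · rw [min_eq_right h, hconst m h]
  rw [← sum_filter, hfilter, hNm, ← neg_sub, ← sum_Ico_sub N (le_min hnm hnK), ← sum_neg_distrib]
  simp only [neg_sub]

lemma sum_sub_eq_sum_card_mul (hconst : ∀ j, K + 1 ≤ j → N j = N (K + 1)) (m : ℕ → ℕ)
    (hm : ∀ n ∈ Icc 1 K, n ≤ m n) :
    ∑ n ∈ Icc 1 K, (N n - N (m n)) =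
      ∑ j ∈ Icc 1 K, ((Icc 1 K).filter fun n => n ≤ j ∧ j < m n).card * (N j - N (j + 1)) := by
  rw [sum_congr rfl fun n hn => sub_eq_sum_Icc_ite hconst (mem_Icc.1 hn).1
    (by have := (mem_Icc.1 hn).2; omega) (hm n hn), sum_comm]
  refine sum_congr rfl fun j _ => ?_
  rw [← sum_filter, sum_const, nsmul_eq_mul]

lemma card_Icc_filter_lt_le (j : ℕ) {x : ℝ} (hx : x ≤ j) :
    (((Icc 1 j).filter fun n : ℕ => x < n).card : ℝ) ≤ j - x + 1 := by
  have hfilter : (Icc 1 j).filter (fun n : ℕ => x < n) = Ioc ⌊x⌋₊ j := by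
    ext n
    simp only [mem_filter, mem_Icc, mem_Ioc]
    constructor
    · rintro ⟨⟨h₁, h₂⟩, h₃⟩
      exact ⟨(Nat.floor_lt' (by omega)).2 h₃, h₂⟩
    · rintro ⟨h₁, h₂⟩
      exact ⟨⟨by omega, h₂⟩, (Nat.floor_lt' (by omega)).1 h₁⟩
  rw [hfilter, Nat.card_Ioc, Nat.cast_sub (Nat.floor_le_of_le hx)]
  linarith [Nat.sub_one_lt_floor x]

lemma mul_card_filter_lt_ceil_le {a L : ℝ} (ha : 1 ≤ a) (hL : 0 ≤ L) (K j : ℕ) :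
    a * ((Icc 1 K).filter fun n => n ≤ j ∧ j < ⌈a * n + L⌉₊).card ≤ (a - 1) * j + (L + a) := by
  have ha0 : 0 < a := by linarith
  have hsub : (Icc 1 K).filter (fun n => n ≤ j ∧ j < ⌈a * n + L⌉₊) ⊆
      (Icc 1 j).filter fun n : ℕ => (j - L) / a < n := by
    intro n hn
    simp only [mem_filter, mem_Icc, Nat.lt_ceil] at hn ⊢
    exact ⟨⟨hn.1.1, hn.2.1⟩, by rw [div_lt_iff₀ ha0]; linarith⟩
  have hx : (j - L) / a ≤ j := by
    rw [div_le_iff₀ ha0]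
    nlinarith [(Nat.cast_nonneg j : (0 : ℝ) ≤ j)]
  have hcard : (((Icc 1 K).filter fun n => n ≤ j ∧ j < ⌈a * n + L⌉₊).card : ℝ) ≤
      j - (j - L) / a + 1 :=
    (Nat.cast_le.2 (card_le_card hsub)).trans (card_Icc_filter_lt_le j hx)
  calc _ ≤ a * (j - (j - L) / a + 1) := mul_le_mul_of_nonneg_left hcard ha0.le
    _ = (a - 1) * j + (L + a) := by field_simp; ring

/-- Summation by parts against the differences `N j - N (j + 1)`: the scales `n` with
`n ≤ j < a n + L` number about `((a - 1) j + L) / a`. -/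
theorem mul_sum_sub_ceil_le (hN : Antitone N) (hconst : ∀ j, K + 1 ≤ j → N j = N (K + 1))
    (hK : 0 ≤ N (K + 1)) {a L : ℝ} (ha : 1 ≤ a) (hL : 0 ≤ L) :
    a * ∑ n ∈ Icc 1 K, (N n - N ⌈a * n + L⌉₊) ≤
      (a - 1) * ∑ n ∈ Icc 1 K, N n + (L + a) * N 1 := by
  have hD : ∀ j, 0 ≤ N j - N (j + 1) := fun j => sub_nonneg.2 (hN j.le_succ)
  have hceil := sum_sub_eq_sum_card_mul hconst (fun n => ⌈a * n + L⌉₊) fun n _ =>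
    Nat.cast_le.1 ((by nlinarith [(Nat.cast_nonneg n : (0 : ℝ) ≤ n)] :
      (n : ℝ) ≤ a * n + L).trans (Nat.le_ceil _))
  have htop := sum_sub_eq_sum_card_mul hconst (fun _ => K + 1) fun n hn => by
    have := (mem_Icc.1 hn).2; omega
  have hcount : ∀ j ∈ Icc 1 K, ((Icc 1 K).filter fun n => n ≤ j ∧ j < K + 1).card = j := by
    intro j hj
    have := (mem_Icc.1 hj).2
    rw [show (Icc 1 K).filter (fun n => n ≤ j ∧ j < K + 1) = Icc 1 j by
      ext n; simp only [mem_filter, mem_Icc]; omega, Nat.card_Icc, Nat.add_sub_cancel]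
  have hmoment : ∑ j ∈ Icc 1 K, (j : ℝ) * (N j - N (j + 1)) = ∑ n ∈ Icc 1 K, N n - K * N (K + 1) :=
    calc _ = ∑ j ∈ Icc 1 K,
          (((Icc 1 K).filter fun n => n ≤ j ∧ j < K + 1).card : ℝ) * (N j - N (j + 1)) :=
          sum_congr rfl fun j hj => by rw [hcount j hj]
      _ = _ := by
          rw [← htop, sum_sub_distrib, sum_const, Nat.card_Icc, Nat.add_sub_cancel, nsmul_eq_mul]
  have htel : N 1 - N (K + 1) = ∑ j ∈ Icc 1 K, (N j - N (j + 1)) := by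
    rw [sub_eq_sum_Icc_ite hconst le_rfl (by omega) (by omega)]
    exact sum_congr rfl fun j hj => if_pos (by have := mem_Icc.1 hj; omega)
  calc a * ∑ n ∈ Icc 1 K, (N n - N ⌈a * n + L⌉₊)
      = ∑ j ∈ Icc 1 K, a * ((Icc 1 K).filter fun n => n ≤ j ∧ j < ⌈a * n + L⌉₊).card *
          (N j - N (j + 1)) := by
        rw [hceil, mul_sum]
        exact sum_congr rfl fun j _ => (mul_assoc _ _ _).symm
    _ ≤ ∑ j ∈ Icc 1 K, ((a - 1) * j + (L + a)) * (N j - N (j + 1)) :=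
        sum_le_sum fun j _ =>
          mul_le_mul_of_nonneg_right (mul_card_filter_lt_ceil_le ha hL K j) (hD j)
    _ = (a - 1) * ∑ j ∈ Icc 1 K, (j : ℝ) * (N j - N (j + 1)) +
          (L + a) * ∑ j ∈ Icc 1 K, (N j - N (j + 1)) := by
        rw [mul_sum, mul_sum, ← sum_add_distrib]
        exact sum_congr rfl fun j _ => by ring
    _ ≤ (a - 1) * ∑ n ∈ Icc 1 K, N n + (L + a) * N 1 := by
        rw [hmoment, ← htel]
        nlinarith [(Nat.cast_nonneg K : (0 : ℝ) ≤ K), mul_nonneg (Nat.cast_nonneg K) hK]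

end Summation

lemma one_div_sub_one_le_zetaR {s : ℝ} (hs : 1 < s) : 1 / (s - 1) ≤ zetaR s := by
  have hanti : AntitoneOn (fun x : ℝ => x ^ (-s)) (Set.Ici ((1 : ℕ) : ℝ)) :=
    (Real.antitoneOn_rpow_Ioi_of_exponent_nonpos (by linarith)).mono fun x hx => by
      simp only [Nat.cast_one, Set.mem_Ici] at hx
      exact Set.mem_Ioi.2 (by linarith)
  have hsum : Summable fun n : ℕ => (n : ℝ) ^ (-s) := Real.summable_nat_rpow.2 (by linarith)
  have h := hanti.integral_le_tsum_comp_add 1 hsum fun t ht => Real.rpow_nonneg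
    (by rw [Set.mem_Ioi, Nat.cast_one] at ht; linarith) _
  rw [integral_Ioi_rpow_of_lt (by linarith) (by norm_num)] at h
  convert h using 1
  · rw [Nat.cast_one, Real.one_rpow, show -s + 1 = -(s - 1) by ring, div_neg, neg_div, neg_neg]
  · refine tsum_congr fun n => ?_
    rw [Real.rpow_neg (by positivity), one_div]
    push_cast
    ring_nf

lemma one_lt_logb {a : ℝ} (ha1 : 1 < a) (ha2 : a < 2) : 1 < Real.logb a 2 :=
  (Real.lt_logb_iff_rpow_lt ha1 two_pos).2 (by rwa [Real.rpow_one])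

/-- With `s = log_a 2`: `(s - 1) log 2 = s log (2 / a) ≤ s (2 / a - 1)`, and `log 2 > 1 / 6`. -/
lemma logb_sub_one_le {a : ℝ} (ha1 : 1 < a) (ha2 : a < 2) :
    Real.logb a 2 - 1 ≤ 6 * Real.logb a 2 * (2 - a) := by
  have hs := one_lt_logb ha1 ha2
  have hsa : Real.logb a 2 * Real.log a = Real.log 2 := by
    rw [Real.logb, div_mul_cancel₀ _ (Real.log_pos ha1).ne']
  have hdiv : Real.log (2 / a) ≤ 2 - a := by
    refine (Real.log_le_sub_one_of_pos (by positivity)).trans ?_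
    rw [div_sub_one (by positivity), div_le_iff₀ (by positivity)]
    nlinarith
  rw [Real.log_div two_ne_zero (by positivity)] at hdiv
  nlinarith [Real.log_two_gt_d9]

lemma le_four_rpow_sub_one {s : ℝ} (hs : 1 ≤ s) : s ≤ 4 ^ (s - 1) :=
  calc s ≤ Real.exp (s - 1) := by linarith [Real.add_one_le_exp (s - 1)]
    _ = Real.exp 1 ^ (s - 1) := (Real.exp_one_rpow _).symm
    _ ≤ 4 ^ (s - 1) := by
      gcongr
      linarith [Real.exp_one_lt_d9]

theorem two_mul_add_four_div_le {a L : ℝ} (ha1 : 1 < a) (ha2 : a < 2) (hL : 2 ≤ L) :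
    (2 * L + 4) / (2 - a) ≤
      6 * (2 * a / (a - 1)) ^ Real.logb a 2 * zetaR (Real.logb a 2) * L ^ Real.logb a 2 := by
  have hs := one_lt_logb ha1 ha2
  have hkey := logb_sub_one_le ha1 ha2
  set s := Real.logb a 2
  have hs1 : 0 < s - 1 := by linarith
  have h2a : 0 < 2 - a := by linarith
  have hB : 4 ≤ 2 * a / (a - 1) := by rw [le_div_iff₀ (by linarith)]; linarith
  calc (2 * L + 4) / (2 - a) ≤ 4 * L / (2 - a) := by gcongr; linarith
    _ ≤ 24 * s * L / (s - 1) := by rw [div_le_div_iff₀ h2a hs1]; nlinarith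
    _ ≤ 24 * 4 ^ (s - 1) * L / (s - 1) := by gcongr; exact le_four_rpow_sub_one hs.le
    _ = 6 * 4 ^ s * (1 / (s - 1)) * L := by rw [Real.rpow_sub_one four_ne_zero]; ring
    _ ≤ 6 * (2 * a / (a - 1)) ^ s * zetaR s * L ^ s := by
        have hζ := one_div_sub_one_le_zetaR hs
        have : 0 ≤ zetaR s := (by positivity : (0 : ℝ) ≤ 1 / (s - 1)).trans hζ
        gcongr
        exact Real.self_le_rpow_of_one_le (by linarith) hs.le

lemma three_mul_two_pow_add_le_two_pow_ceil {M a L : ℝ} (ha : 1 ≤ a) (h2L : 3 + 4 * M ≤ 2 ^ L)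
    (n : ℕ) :
    3 * (2 : ℝ) ^ n + 4 * M * 2 ^ (a * n) ≤ 2 ^ ⌈a * n + L⌉₊ := by
  have hn : (2 : ℝ) ^ n ≤ 2 ^ (a * n) := by
    rw [← Real.rpow_natCast]
    exact Real.rpow_le_rpow_of_exponent_le one_le_two
      (le_mul_of_one_le_left (Nat.cast_nonneg n) ha)
  calc 3 * (2 : ℝ) ^ n + 4 * M * 2 ^ (a * n) ≤ (3 + 4 * M) * 2 ^ (a * n) := by linarith
    _ ≤ 2 ^ L * 2 ^ (a * n) := by gcongr
    _ = 2 ^ (a * n + L) := by rw [Real.rpow_add two_pos, mul_comm]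
    _ ≤ 2 ^ (⌈a * n + L⌉₊ : ℝ) := Real.rpow_le_rpow_of_exponent_le one_le_two (Nat.le_ceil _)
    _ = 2 ^ ⌈a * n + L⌉₊ := Real.rpow_natCast _ _

theorem two_sub_mul_coverSize_le {M a L : ℝ} (hM : 0 ≤ M) (ha1 : 1 ≤ a) (ha2 : a < 2)
    (hL : 0 ≤ L) (h2L : 3 + 4 * M ≤ 2 ^ L) {γ : Finset ℤ} (hne : γ.Nonempty) :
    (2 - a) * coverSize γ ≤ (2 * L + 4) * isoCoverSize M a γ := by
  set K := n0 γ
  set N : ℕ → ℝ := fun n => (cover n γ).card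
  set N' : ℕ → ℝ := fun n => (isoCover M a n γ).card
  set G : ℝ := (γ.card : ℝ)
  have hN : Antitone N := fun _ _ h => Nat.cast_le.2 (card_cover_antitone γ h)
  have hconst : ∀ j, K + 1 ≤ j → N j = N (K + 1) := fun j hj => by
    simp only [N, card_cover_eq_one hne (Nat.lt_of_succ_le hj),
      card_cover_eq_one hne K.lt_succ_self]
  have hNG : ∀ n, N n ≤ G := fun n => Nat.cast_le.2 (Finset.card_le_card (cover_subset n γ))
  have hmerge : ∀ n ∈ Finset.Icc 1 K, N n - N' n ≤ 2 * (N n - N ⌈a * n + L⌉₊) := fun n _ => by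
    have := two_mul_card_cover_add_card_cover_le hM a γ
      (three_mul_two_pow_add_le_two_pow_ceil ha1 h2L n)
    have := (Nat.cast_le (α := ℝ)).2 this
    push_cast at this
    simp only [N, N']
    linarith
  have hsum := mul_sum_sub_ceil_le hN hconst (by positivity) ha1 hL
  have hcover : (coverSize γ : ℝ) = N 0 + ∑ n ∈ Finset.Icc 1 K, N n := by
    rw [coverSize, Nat.cast_sum, Finset.range_eq_Ico,
      Finset.sum_eq_sum_Ico_succ_bot (by omega : 0 < K + 1), Finset.Ico_add_one_right_eq_Icc]
  have hiso : (isoCoverSize M a γ : ℝ) = G + ∑ n ∈ Finset.Icc 1 K, N' n := by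
    rw [isoCoverSize]
    push_cast
    rfl
  have hS' : 0 ≤ ∑ n ∈ Finset.Icc 1 K, N' n := Finset.sum_nonneg fun n _ => Nat.cast_nonneg _
  have := Finset.sum_le_sum hmerge
  rw [Finset.sum_sub_distrib, ← Finset.mul_sum] at this
  rw [hcover, hiso]
  nlinarith [hNG 0, hNG 1, mul_le_mul_of_nonneg_left this (by linarith : 0 ≤ a),
    mul_le_mul_of_nonneg_left (hNG 1) (by linarith : 0 ≤ L + a), (Nat.cast_nonneg _ : (0 : ℝ) ≤ G)]

theorem coverSize_le_isoCoverSize_general (M a : ℝ) (ha1 : 1 < a) (ha2 : a < 2) (hM : 1 < M)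
    (hMa : 3 / (2 - a) ≤ Real.logb 2 (8 * M))
    (γ : Finset ℤ) (hne : γ.Nonempty) :
    (coverSize γ : ℝ)
      ≤ 6 * (2 * a / (a - 1)) ^ Real.logb a 2 * zetaR (Real.logb a 2) *
          Real.logb 2 (8 * M) ^ Real.logb a 2 * (isoCoverSize M a γ : ℝ) := by
  set L := Real.logb 2 (8 * M)
  have h2a : 0 < 2 - a := by linarith
  have hL : 2 ≤ L := by
    have : 3 ≤ 3 / (2 - a) := by rw [le_div_iff₀ h2a]; linarith
    linarith
  have h2L : 3 + 4 * M ≤ 2 ^ L := by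
    rw [Real.rpow_logb two_pos (by norm_num) (by linarith)]
    linarith
  have hcover := two_sub_mul_coverSize_le (by linarith) ha1.le ha2 (by linarith) h2L hne
  calc (coverSize γ : ℝ) ≤ (2 * L + 4) / (2 - a) * isoCoverSize M a γ := by
        rw [div_mul_eq_mul_div, le_div_iff₀ h2a]
        linarith
    _ ≤ _ := by
        gcongr
        exact two_mul_add_four_div_le ha1 ha2 hL

/-- comparison of the two cover sizes, `𝒩(γ) ≤ c(M,a)·𝒩'(γ)` with
`c(M,a) = 6·(2a/(a−1))^{log_a 2}·ζ(log_a 2)·(log₂(8M))^{log_a 2}`. -/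
theorem coverSize_le_isoCoverSize (M a : ℝ) (ha1 : 1 < a) (ha2 : a < 2) (hM : 1 < M)
    (hMa : 3 / (2 - a) ≤ Real.logb 2 (8 * M))
    (γ : Finset ℤ) (hne : γ.Nonempty) (heven : Even γ.card) :
    (coverSize γ : ℝ)
      ≤ 6 * (2 * a / (a - 1)) ^ Real.logb a 2 * zetaR (Real.logb a 2) *
          Real.logb 2 (8 * M) ^ Real.logb a 2 * (isoCoverSize M a γ : ℝ) :=
  coverSize_le_isoCoverSize_general M a ha1 ha2 hM hMa γ hne
end
end

section
/- Let γ = {b₁ < b₂ < … < b_k} ⊂ ℤ+1/2 be finite with k ≥ 2. Then the cover size satisfies 𝒩(γ) ≥ ∑_{j=1}^{k−1} (1 + ⌊log₂(b_{j+1} − b_j)⌋) (the logarithmic length of γ). -/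
noncomputable section

/-! At scale `n`, two consecutive points `b_j < b_{j+1}` with `b_{j+1} - b_j ≥ 2ⁿ` cannot lie in
a common interval of `𝒾ₙ(γ)`; sending each such gap to the interval containing `b_{j+1}` is
therefore injective, so `|𝒾ₙ(γ)|` is at least the number of gaps of size `≥ 2ⁿ`. Summing over
`n ≤ n₀(γ)` and exchanging the sums, a gap `g` is counted once for each `n` with `2ⁿ ≤ g`, that is
`1 + ⌊log₂ g⌋` times, since `g ≤ diam γ` forces all these `n` to be at most `n₀(γ)`. -/

open scoped Finset

lemma exists_mem_coverAux (n : ℕ) :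
    ∀ (fuel : ℕ) (γ : Finset ℤ), γ.card ≤ fuel → ∀ x ∈ γ,
      ∃ c ∈ coverAux n fuel γ, c ≤ x ∧ x < c + 2 ^ n
  | 0, γ, hγ, x, hx => by simp_all
  | fuel + 1, γ, hγ, x, hx => by
    have hne : γ.Nonempty := ⟨x, hx⟩
    rw [coverAux, dif_pos hne]
    by_cases hx_first : x < γ.min' hne + 2 ^ n
    · exact ⟨_, Finset.mem_insert_self _ _, γ.min'_le x hx, hx_first⟩
    · set rest := γ.filter fun y => γ.min' hne + 2 ^ n ≤ y
      have hrest : rest ⊂ γ :=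
        Finset.filter_ssubset.mpr
          ⟨_, γ.min'_mem hne, not_le.mpr (lt_add_of_pos_right _ (by positivity))⟩
      obtain ⟨c, hc, hcx⟩ := exists_mem_coverAux n fuel rest
        (by have := Finset.card_lt_card hrest; omega) x (by simp [rest, hx, not_lt.mp hx_first])
      exact ⟨c, Finset.mem_insert_of_mem hc, hcx⟩

lemma exists_mem_cover (n : ℕ) {γ : Finset ℤ} {x : ℤ} (hx : x ∈ γ) :
    ∃ c ∈ cover n γ, c ≤ x ∧ x < c + 2 ^ n :=
  exists_mem_coverAux n γ.card γ le_rfl x hx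

section SortedElem

variable {α : Type*} [LinearOrder α] [Zero α] {s : Finset α} {i j : ℕ}

def sortedElem (s : Finset α) (j : ℕ) : α := (s.sort (· ≤ ·)).getD j 0

lemma sortedElem_eq_getElem (hj : j < s.card) :
    sortedElem s j = (s.sort (· ≤ ·))[j]'(by rwa [Finset.length_sort]) :=
  List.getD_eq_getElem _ _ _

lemma sortedElem_mem (hj : j < s.card) : sortedElem s j ∈ s := by
  rw [sortedElem_eq_getElem hj, ← Finset.mem_sort (· ≤ ·)]
  exact List.getElem_mem _

lemma sortedElem_lt_sortedElem (hij : i < j) (hj : j < s.card) :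
    sortedElem s i < sortedElem s j := by
  rw [sortedElem_eq_getElem (hij.trans hj), sortedElem_eq_getElem hj,
    (Finset.sortedLT_sort s).getElem_lt_getElem_iff]
  exact hij

lemma sortedElem_le_sortedElem (hij : i ≤ j) (hj : j < s.card) :
    sortedElem s i ≤ sortedElem s j := by
  rcases hij.eq_or_lt with rfl | hij
  · exact le_rfl
  · exact (sortedElem_lt_sortedElem hij hj).le

end SortedElem

section Gap

variable {s : Finset ℤ} {j : ℕ}

def gap (s : Finset ℤ) (j : ℕ) : ℕ := (sortedElem s (j + 1) - sortedElem s j).toNat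

lemma gap_pos (hj : j + 1 < s.card) : 0 < gap s j := by
  have := sortedElem_lt_sortedElem j.lt_add_one hj
  unfold gap; omega

lemma diamZ_eq_max'_sub_min' (hs : s.Nonempty) : diamZ s = s.max' hs - s.min' hs := by
  rw [diamZ, ← Finset.coe_max' hs, ← Finset.coe_min' hs]
  rfl

lemma log_gap_le_n0 (hj : j + 1 < s.card) : Nat.log 2 (gap s j) ≤ n0 s := by
  refine Nat.log_mono_right ?_
  have hs : s.Nonempty := Finset.card_pos.mp (by omega)
  have hmax := s.le_max' _ (sortedElem_mem hj)
  have hmin := s.min'_le _ (sortedElem_mem (j.lt_add_one.trans hj))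
  rw [gap, diamZ_eq_max'_sub_min' hs]
  omega

lemma card_filter_le_gap_le_card {C : Finset ℤ} {d : ℕ}
    (hC : ∀ x ∈ s, ∃ c ∈ C, c ≤ x ∧ x < c + d) :
    #{j ∈ Finset.range (s.card - 1) | d ≤ gap s j} ≤ C.card := by
  choose! left hleft using hC
  refine Finset.card_le_card_of_injOn (fun j => left (sortedElem s (j + 1))) ?_
    (StrictMonoOn.injOn ?_)
  · intro j hj
    rw [Finset.mem_coe, Finset.mem_filter, Finset.mem_range] at hj
    exact (hleft _ (sortedElem_mem (by omega))).1
  · intro a ha b hb hab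
    rw [Finset.mem_coe, Finset.mem_filter, Finset.mem_range] at ha hb
    obtain ⟨-, hca, -⟩ := hleft _ (sortedElem_mem (s := s) (j := a + 1) (by omega))
    obtain ⟨-, hcb_le, hcb⟩ := hleft _ (sortedElem_mem (s := s) (j := b + 1) (by omega))
    have hsorted := sortedElem_le_sortedElem (s := s) (by omega : a + 1 ≤ b) (by omega)
    have hgap := hb.2
    unfold gap at hgap
    dsimp only
    omega

end Gap

lemma card_filter_range_pow_le {b g N : ℕ} (hb : 1 < b) (hg : g ≠ 0) (hN : Nat.log b g ≤ N) :
    #{m ∈ Finset.range (N + 1) | b ^ m ≤ g} = Nat.log b g + 1 := by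
  rw [← Finset.card_range (Nat.log b g + 1)]
  congr 1
  ext m
  simp only [Finset.mem_filter, Finset.mem_range, ← Nat.le_log_iff_pow_le hb hg]
  omega

theorem coverSize_ge_log_length_general (γ : Finset ℤ) :
    ∑ j ∈ Finset.range (γ.card - 1),
        (1 + Nat.log 2 (((γ.sort (· ≤ ·)).getD (j + 1) 0 - (γ.sort (· ≤ ·)).getD j 0).toNat))
      ≤ coverSize γ := by
  change ∑ j ∈ Finset.range (γ.card - 1), (1 + Nat.log 2 (gap γ j)) ≤ _
  calc ∑ j ∈ Finset.range (γ.card - 1), (1 + Nat.log 2 (gap γ j))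
      = ∑ j ∈ Finset.range (γ.card - 1), #{m ∈ Finset.range (n0 γ + 1) | 2 ^ m ≤ gap γ j} := by
        refine Finset.sum_congr rfl fun j hj => ?_
        have hj : j + 1 < γ.card := by have := Finset.mem_range.mp hj; omega
        rw [card_filter_range_pow_le one_lt_two (gap_pos hj).ne' (log_gap_le_n0 hj), add_comm]
    _ = ∑ m ∈ Finset.range (n0 γ + 1), #{j ∈ Finset.range (γ.card - 1) | 2 ^ m ≤ gap γ j} :=
        Finset.sum_card_bipartiteAbove_eq_sum_card_bipartiteBelow _
    _ ≤ coverSize γ := Finset.sum_le_sum fun m _ =>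
        card_filter_le_gap_le_card fun _ hx => by exact_mod_cast exists_mem_cover m hx

/-- the cover size dominates the logarithmic length
`∑_{j=1}^{k−1} (1 + ⌊log₂(b_{j+1} − b_j)⌋)`, where `b₁ < … < b_k` are the elements
of `γ` (listed by `Finset.sort`); `⌊log₂ m⌋ = Nat.log 2 m` for `m ≥ 1`. -/
theorem coverSize_ge_log_length (γ : Finset ℤ) (hk : 2 ≤ γ.card) :
    ∑ j ∈ Finset.range (γ.card - 1),
        (1 + Nat.log 2 (((γ.sort (· ≤ ·)).getD (j + 1) 0 - (γ.sort (· ≤ ·)).getD j 0).toNat))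
      ≤ coverSize γ :=
  coverSize_ge_log_length_general γ
end
end
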